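/- For an ideal I of C(X) and f ∈ C(X), the scalar-multiplication map φ_f : ℝ → C(X), r ↦ r·f, is continuous into C(X) with the U^I-topology if and only if f ∈ I ∩ C*(X). -/

import Mathlib

open TopologicalSpace
open scoped ENNReal NNReal

variable {X : Type*}

/-- The (possibly infinite) sup-distance between two continuous functions. -/
noncomputable def supDist [TopologicalSpace X] (f g : C(X, ℝ)) : ℝ≥0∞ :=
  ⨆ x, (‖f x - g x‖₊ : ℝ≥0∞)

/-- Basic set for the `U^I`-topology. -/
def UIball [TopologicalSpace X] (I : Ideal C(X, ℝ)) (f : C(X, ℝ)) (ε : ℝ) :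
    Set C(X, ℝ) :=
  {g | supDist f g < ENNReal.ofReal ε ∧ f - g ∈ I}

/-- The `U^I`-topology on `C(X, ℝ)`. -/
def UItop [TopologicalSpace X] (I : Ideal C(X, ℝ)) : TopologicalSpace C(X, ℝ) :=
  generateFrom {S | ∃ f ε, 0 < ε ∧ S = UIball I f ε}

/-- Basic set for the `m^I`-topology. -/
def mIball [TopologicalSpace X] (I : Ideal C(X, ℝ)) (f u : C(X, ℝ)) :
    Set C(X, ℝ) :=
  {g | (∀ x, |f x - g x| < u x) ∧ f - g ∈ I}

/-- The `m^I`-topology on `C(X, ℝ)`. -/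
def mItop [TopologicalSpace X] (I : Ideal C(X, ℝ)) : TopologicalSpace C(X, ℝ) :=
  generateFrom {S | ∃ f u, (∀ x, 0 < u x) ∧ S = mIball I f u}

/-- The topology of uniform convergence (`U`-topology) on `C(X, ℝ)`. -/
def Utop [TopologicalSpace X] : TopologicalSpace C(X, ℝ) :=
  generateFrom {S | ∃ (f : C(X, ℝ)) (ε : ℝ), 0 < ε ∧
    S = {g | supDist f g < ENNReal.ofReal ε}}

/-- The `m`-topology on `C(X, ℝ)`. -/
def mtop [TopologicalSpace X] : TopologicalSpace C(X, ℝ) :=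
  generateFrom {S | ∃ (f u : C(X, ℝ)), (∀ x, 0 < u x) ∧
    S = {g | ∀ x, |f x - g x| < u x}}

/-- The bounded continuous functions `C*(X)` as a subset of `C(X, ℝ)`. -/
def Cstar [TopologicalSpace X] : Set C(X, ℝ) :=
  {f | ∃ M : ℝ, ∀ x, |f x| ≤ M}

lemma supDist_triangle [TopologicalSpace X] (f g h : C(X, ℝ)) :
    supDist f h ≤ supDist f g + supDist g h := by
  refine iSup_le fun x => ?_
  have h1 : ‖f x - h x‖₊ ≤ ‖f x - g x‖₊ + ‖g x - h x‖₊ := by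
    calc ‖f x - h x‖₊ = ‖(f x - g x) + (g x - h x)‖₊ := by rw [sub_add_sub_cancel]
    _ ≤ _ := nnnorm_add_le _ _
  calc (‖f x - h x‖₊ : ℝ≥0∞) ≤ ((‖f x - g x‖₊ + ‖g x - h x‖₊ : ℝ≥0) : ℝ≥0∞) := by
        exact_mod_cast h1
  _ = (‖f x - g x‖₊ : ℝ≥0∞) + (‖g x - h x‖₊ : ℝ≥0∞) := by push_cast; ring
  _ ≤ supDist f g + supDist g h :=
      add_le_add (le_iSup (fun x => (‖f x - g x‖₊ : ℝ≥0∞)) x)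
        (le_iSup (fun x => (‖g x - h x‖₊ : ℝ≥0∞)) x)

theorem stmt8_aux [TopologicalSpace X]
    (I : Ideal C(X, ℝ)) (f : C(X, ℝ)) :
    @Continuous ℝ C(X, ℝ) _ (UItop I) (fun r : ℝ => r • f) ↔
      f ∈ (I : Set C(X, ℝ)) ∩ Cstar := by
  constructor
  · intro hc
    have hopen : @IsOpen _ (UItop I) (UIball I f 1) :=
      TopologicalSpace.GenerateOpen.basic _ ⟨f, 1, one_pos, rfl⟩
    have hpre : IsOpen ((fun r : ℝ => r • f) ⁻¹' UIball I f 1) :=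
      @Continuous.isOpen_preimage ℝ C(X, ℝ) _ (UItop I) _ hc _ hopen
    have h1 : (1 : ℝ) ∈ (fun r : ℝ => r • f) ⁻¹' UIball I f 1 := by
      constructor
      · simp only [one_smul]
        have : supDist f f = 0 := by
          simp [supDist]
        rw [this]
        simp
      · simp only [one_smul, sub_self]
        exact I.zero_mem
    obtain ⟨δ, hδ, hball⟩ := Metric.isOpen_iff.mp hpre 1 h1
    set r : ℝ := 1 - δ / 2 with hr
    have hrmem : r ∈ Metric.ball (1 : ℝ) δ := by
      simp only [Metric.mem_ball, Real.dist_eq, hr]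
      rw [show (1 - δ/2 - 1 : ℝ) = -(δ/2) by ring, abs_neg, abs_of_pos (by linarith)]
      linarith
    obtain ⟨hd, hi⟩ := hball hrmem
    have key : f - r • f = (δ / 2) • f := by
      ext x
      simp [hr]
      ring
    constructor
    · -- f ∈ I
      have h2 : (δ / 2) • f ∈ I := key ▸ hi
      have h3 : f = ((δ / 2)⁻¹ : ℝ) • ((δ / 2) • f) := by
        rw [smul_smul, inv_mul_cancel₀ (by positivity), one_smul]
      rw [h3]
      exact I.smul_of_tower_mem _ h2
    · -- bounded
      refine ⟨2 / δ, fun x => ?_⟩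
      have hx : (‖f x - (r • f) x‖₊ : ℝ≥0∞) < ENNReal.ofReal 1 :=
        lt_of_le_of_lt (le_iSup (fun x => (‖f x - (r • f) x‖₊ : ℝ≥0∞)) x) hd
      have hx2 : ‖f x - (r • f) x‖ < 1 := by
        rw [← enorm_eq_nnnorm, ← ofReal_norm] at hx
        rw [ENNReal.ofReal_lt_ofReal_iff one_pos] at hx
        exact hx
      have hval : f x - (r • f) x = (δ / 2) * f x := by
        simp [hr]; ring
      have h5 : |f x - (r • f) x| < 1 := by rwa [Real.norm_eq_abs] at hx2
      rw [hval, abs_mul, abs_of_pos (by linarith : (0:ℝ) < δ/2)] at h5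
      rw [le_div_iff₀ hδ]
      nlinarith [abs_nonneg (f x)]
  · rintro ⟨hfI, M, hM⟩
    rw [UItop, continuous_generateFrom_iff]
    rintro S ⟨g, ε, hε, rfl⟩
    by_cases hg : g ∈ I
    · -- preimage = {r | supDist g (r•f) < ofReal ε}
      rw [Metric.isOpen_iff]
      intro r₀ hr₀
      obtain ⟨hd0, _⟩ := hr₀
      set M' : ℝ := max M 0 with hM'
      have hM'0 : 0 ≤ M' := le_max_right _ _
      have hdt : (supDist g (r₀ • f)).toReal < ε := ENNReal.toReal_lt_of_lt_ofReal hd0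
      have hdne : supDist g (r₀ • f) ≠ ⊤ := ne_top_of_lt hd0
      set δ : ℝ := (ε - (supDist g (r₀ • f)).toReal) / (M' + 1) with hδdef
      have hδpos : 0 < δ := by
        apply div_pos (by linarith) (by linarith)
      refine ⟨δ, hδpos, fun r hrmem => ?_⟩
      simp only [Metric.mem_ball, Real.dist_eq] at hrmem
      constructor
      · -- supDist
        have hstep : supDist (r₀ • f) (r • f) ≤ ENNReal.ofReal (|r₀ - r| * M') := by
          refine iSup_le fun x => ?_
          rw [← enorm_eq_nnnorm, ← ofReal_norm]
          apply ENNReal.ofReal_le_ofReal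
          have : (r₀ • f) x - (r • f) x = (r₀ - r) * f x := by simp; ring
          rw [this, Real.norm_eq_abs, abs_mul]
          apply mul_le_mul_of_nonneg_left _ (abs_nonneg _)
          exact le_trans (hM x) (le_max_left _ _)
        have htri := supDist_triangle g (r₀ • f) (r • f)
        have hlt : (supDist g (r₀ • f)).toReal + |r₀ - r| * M' < ε := by
          have h1 : |r₀ - r| < δ := by rw [abs_sub_comm]; exact hrmem
          have h2 : |r₀ - r| * M' ≤ δ * M' :=
            mul_le_mul_of_nonneg_right h1.le hM'0
          have h3 : δ * M' < δ * (M' + 1) := by nlinarith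
          have h4 : δ * (M' + 1) = ε - (supDist g (r₀ • f)).toReal := by
            rw [hδdef]; field_simp
          linarith
        calc supDist g (r • f) ≤ supDist g (r₀ • f) + supDist (r₀ • f) (r • f) := htri
        _ ≤ supDist g (r₀ • f) + ENNReal.ofReal (|r₀ - r| * M') := by
            exact add_le_add_right hstep _
        _ = ENNReal.ofReal ((supDist g (r₀ • f)).toReal + |r₀ - r| * M') := by
            rw [ENNReal.ofReal_add ENNReal.toReal_nonneg (by positivity),
              ENNReal.ofReal_toReal hdne]
        _ < ENNReal.ofReal ε := (ENNReal.ofReal_lt_ofReal_iff hε).mpr hlt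
      · exact I.sub_mem hg (I.smul_of_tower_mem r hfI)
    · -- preimage empty
      convert isOpen_empty
      ext r
      simp only [Set.mem_preimage, Set.mem_empty_iff_false, iff_false]
      rintro ⟨-, hmem⟩
      exact hg (by simpa using I.add_mem hmem (I.smul_of_tower_mem r hfI))

theorem stmt8 [TopologicalSpace X] [T2Space X] [CompletelyRegularSpace X]
    (I : Ideal C(X, ℝ)) (f : C(X, ℝ)) :
    @Continuous ℝ C(X, ℝ) _ (UItop I) (fun r : ℝ => r • f) ↔
      f ∈ (I : Set C(X, ℝ)) ∩ Cstar := stmt8_aux I f
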